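/- When acting on even polynomials f(x₁²,…,x_r²) with f symmetric, the type-D Cherednik operator U_j^D equals, after the substitution y_j = x_j², the operator 2(U_j^A - 1/2), where U_j^A is the type-A Cherednik operator in variables y₁,…,y_r with parameter a. -/

import Mathlib

/-!
For symmetric `f`, the polynomial `p = f(x₁², …, x_r²)` is fixed by every `s_{ij}` and, since
only squares occur in it, by every `σ_{ij}`. Hence `(1 - s_{ij})(x_j p) = (x_j - x_i) p` and
`(1 - σ_{ij})(x_j p) = (x_j + x_i) p`, so each difference quotient in `D_j^D x_j p` returns `p`;
the same happens on the type-A side. Both Cherednik operators thus reduce to `∂_j x_j` plus a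
multiple of the identity, and the two sides are matched by the chain rule
`∂_j (x_j f(x²)) = (2 ∂_j (y_j f) - f)(x²)`, i.e. `x_j ∂_{x_j} = 2 y_j ∂_{y_j}`.
-/

open MvPolynomial Finset

noncomputable section

abbrev Pol (r : ℕ) : Type := MvPolynomial (Fin r) ℂ

/-- Multiplication operator by a polynomial. -/
def mulOp {r : ℕ} (p : Pol r) : Module.End ℂ (Pol r) := LinearMap.mulLeft ℂ p

/-- Partial derivative operator. -/
def pd {r : ℕ} (j : Fin r) : Module.End ℂ (Pol r) := (pderiv j).toLinearMap

/-- The transposition operator `s_{ij}` swapping the variables `i` and `j`. -/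
def swOp {r : ℕ} (i j : Fin r) : Module.End ℂ (Pol r) :=
  (rename ⇑(Equiv.swap i j) : Pol r →ₐ[ℂ] Pol r).toLinearMap

/-- The sign change operator `σ_j : x_j ↦ -x_j`. -/
def negOp {r : ℕ} (j : Fin r) : Module.End ℂ (Pol r) :=
  (aeval (fun k : Fin r => if k = j then -(X j) else X k) : Pol r →ₐ[ℂ] Pol r).toLinearMap

/-- The signed transposition operator `σ_{ij} : x_i ↦ -x_j, x_j ↦ -x_i`. -/
def sswOp {r : ℕ} (i j : Fin r) : Module.End ℂ (Pol r) :=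
  (aeval (fun k : Fin r => if k = i then -(X j) else if k = j then -(X i) else X k)
    : Pol r →ₐ[ℂ] Pol r).toLinearMap

/-- Ordered product `f 0 * f 1 * ⋯ * f (r-1)` of operators. -/
def opProd {r : ℕ} (f : Fin r → Module.End ℂ (Pol r)) : Module.End ℂ (Pol r) :=
  ((List.finRange r).map f).prod

/-- The type-D Dunkl operator (no long-root term)
`D_j = ∂_j + (a/2) ∑_{i≠j} [(x_j-x_i)⁻¹(1-s_{ij}) + (x_j+x_i)⁻¹(1-σ_{ij})]`. -/
def dunklD {r : ℕ} (a : ℂ) (qs qσ : Fin r → Fin r → Module.End ℂ (Pol r)) (j : Fin r) :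
    Module.End ℂ (Pol r) :=
  pd j + (a / 2) • ∑ i ∈ Finset.univ.erase j, (qs i j + qσ i j)

/-- Specification: `qs i j` is division of `(1 - s_{ij}) f` by `x_j - x_i`. -/
def QuotS {r : ℕ} (qs : Fin r → Fin r → Module.End ℂ (Pol r)) : Prop :=
  ∀ i j : Fin r, i ≠ j → ∀ f : Pol r, (X j - X i) * qs i j f = f - swOp i j f

/-- Specification: `qσ i j` is division of `(1 - σ_{ij}) f` by `x_j + x_i`. -/
def QuotSig {r : ℕ} (qσ : Fin r → Fin r → Module.End ℂ (Pol r)) : Prop :=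
  ∀ i j : Fin r, i ≠ j → ∀ f : Pol r, (X j + X i) * qσ i j f = f - sswOp i j f

/-- The type-D Cherednik operator `U_j^D = D_j x_j - (a/2) ∑_{i<j} (s_{ij} + σ_{ij})`. -/
def cherednikD {r : ℕ} (a : ℂ) (qs qσ : Fin r → Fin r → Module.End ℂ (Pol r)) (j : Fin r) :
    Module.End ℂ (Pol r) :=
  dunklD a qs qσ j * mulOp (X j) -
    (a / 2) • ∑ i ∈ Finset.univ.filter (fun i => i < j), (swOp i j + sswOp i j)

/-- The type-A Dunkl operator `D_j = ∂_j + (a/2) ∑_{i ≠ j} q i j`, where `q i j` is the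
difference-quotient operator `f ↦ (y_j - y_i)⁻¹ (1 - s_{ij}) f` (given as data, pinned down
by the divisibility specification `DunklQuotA`). -/
def dunklA {r : ℕ} (a : ℂ) (q : Fin r → Fin r → Module.End ℂ (Pol r)) (j : Fin r) :
    Module.End ℂ (Pol r) :=
  pd j + (a / 2) • ∑ i ∈ Finset.univ.erase j, q i j

/-- Specification: `q i j` is division of `(1 - s_{ij}) f` by `y_j - y_i`. -/
def DunklQuotA {r : ℕ} (q : Fin r → Fin r → Module.End ℂ (Pol r)) : Prop :=
  ∀ i j : Fin r, i ≠ j → ∀ f : Pol r,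
    (X j - X i) * q i j f = f - swOp i j f

/-- The type-A Cherednik operator `U_j = D_j y_j - (a/2) ∑_{i<j} s_{ij}`. -/
def cherednikA {r : ℕ} (a : ℂ) (q : Fin r → Fin r → Module.End ℂ (Pol r)) (j : Fin r) :
    Module.End ℂ (Pol r) :=
  dunklA a q j * mulOp (X j) - (a / 2) • ∑ i ∈ Finset.univ.filter (fun i => i < j), swOp i j

/-- Substitution of squared variables: `f(y₁,…,y_r) ↦ f(x₁²,…,x_r²)`. -/
def sqVars {r : ℕ} (f : Pol r) : Pol r := aeval (fun k : Fin r => (X k) ^ 2) f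

theorem MvPolynomial.pderiv_aeval {σ τ R : Type*} [CommSemiring R] [Fintype σ]
    (g : σ → MvPolynomial τ R) (i : τ) (f : MvPolynomial σ R) :
    pderiv i (aeval g f) = ∑ k, aeval g (pderiv k f) * pderiv i (g k) := by
  classical
  induction f using MvPolynomial.induction_on with
  | C c => simp
  | add p q hp hq => simp only [map_add, hp, hq, add_mul, sum_add_distrib]
  | mul_X p k hp =>
    simp only [map_mul, aeval_X, Derivation.leibniz, pderiv_X, hp, smul_eq_mul, map_add,
      Pi.single_apply, mul_ite, mul_one, mul_zero, add_mul, sum_add_distrib, apply_ite (aeval g),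
      map_zero, ite_mul, zero_mul, sum_ite_eq, mem_univ, if_true, mul_sum, mul_assoc]

theorem apply_mul_eq_of_mul_apply_eq_sub {R F : Type*} [CommRing R] [IsDomain R]
    [FunLike F R R] [MulHomClass F R R] (q : R → R) (g : F) {d x p : R} (hd : d ≠ 0)
    (hq : ∀ f, d * q f = f - g f) (hx : x - g x = d) (hp : g p = p) : q (x * p) = p :=
  mul_left_cancel₀ hd (by rw [hq, map_mul, hp, ← hx]; ring)

theorem MvPolynomial.X_sub_X_ne_zero {σ R : Type*} [CommRing R] [Nontrivial R] {i j : σ}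
    (h : i ≠ j) : (X j - X i : MvPolynomial σ R) ≠ 0 :=
  sub_ne_zero.mpr fun hX => h (X_injective hX).symm

theorem MvPolynomial.X_add_X_ne_zero {σ R : Type*} [CommSemiring R] [Nontrivial R] {i j : σ}
    (h : i ≠ j) : (X j + X i : MvPolynomial σ R) ≠ 0 := fun hX => by
  classical
  simpa [coeff_X, Finsupp.single_left_inj, h] using congrArg (coeff (Finsupp.single j 1)) hX

section Cherednik

variable {r : ℕ}

theorem rename_sqVars (e : Fin r → Fin r) (f : Pol r) :
    rename e (sqVars f) = sqVars (rename e f) := by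
  simp only [sqVars, ← AlgHom.comp_apply]
  congr 1
  ext k
  simp

theorem isSymmetric_sqVars {f : Pol r} (hf : f.IsSymmetric) : (sqVars f).IsSymmetric :=
  fun e => by rw [rename_sqVars, hf]

theorem sswOp_sqVars (i j : Fin r) (f : Pol r) : sswOp i j (sqVars f) = swOp i j (sqVars f) := by
  simp only [sswOp, swOp, sqVars, AlgHom.toLinearMap_apply, ← AlgHom.comp_apply]
  congr 1
  ext k
  by_cases hki : k = i
  · subst hki; simp
  · by_cases hkj : k = j
    · subst hkj; simp [hki]
    · simp [hki, hkj, Equiv.swap_apply_of_ne_of_ne hki hkj]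

theorem pderiv_sqVars (j : Fin r) (f : Pol r) :
    pderiv j (sqVars f) = 2 * X j * sqVars (pderiv j f) := by
  rw [sqVars, pderiv_aeval]
  simp only [pderiv_pow, pderiv_X, Pi.single_apply, mul_ite, mul_one, mul_zero, sum_ite_eq',
    mem_univ, if_true]
  simp [sqVars]
  ring

theorem pd_apply (j : Fin r) (p : Pol r) : pd j p = pderiv j p := rfl

theorem pderiv_X_mul_sqVars (j : Fin r) (f : Pol r) :
    pderiv j (X j * sqVars f) = sqVars ((2 : ℂ) • pderiv j (X j * f) - f) := by
  simp only [Derivation.leibniz, pderiv_X_self, pderiv_sqVars]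
  simp [sqVars, two_smul]
  ring

theorem swOp_apply_of_isSymmetric {p : Pol r} (hp : p.IsSymmetric) (i j : Fin r) :
    swOp i j p = p :=
  hp _

section Quotients

variable {q : Module.End ℂ (Pol r)} {i j : Fin r} {p : Pol r}

theorem swOpQuot_apply_X_mul (hij : i ≠ j) (hq : ∀ f, (X j - X i) * q f = f - swOp i j f)
    (hp : swOp i j p = p) : q (X j * p) = p :=
  apply_mul_eq_of_mul_apply_eq_sub q (rename (Equiv.swap i j) : Pol r →ₐ[ℂ] Pol r)
    (X_sub_X_ne_zero hij) hq (by simp) hp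

theorem sswOpQuot_apply_X_mul (hij : i ≠ j) (hq : ∀ f, (X j + X i) * q f = f - sswOp i j f)
    (hp : sswOp i j p = p) : q (X j * p) = p :=
  apply_mul_eq_of_mul_apply_eq_sub q
    (aeval fun k : Fin r => if k = i then -(X j) else if k = j then -(X i) else X k)
    (X_add_X_ne_zero hij) hq (by simp [hij.symm]) hp

end Quotients

variable {a : ℂ} {j : Fin r}

theorem dunklA_X_mul_of_isSymmetric {q : Fin r → Fin r → Module.End ℂ (Pol r)}
    (hq : DunklQuotA q) {p : Pol r} (hp : p.IsSymmetric) :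
    dunklA a q j (X j * p) = pderiv j (X j * p) + (a / 2) • (#(univ.erase j) • p) := by
  rw [dunklA, LinearMap.add_apply, LinearMap.smul_apply, LinearMap.sum_apply, pd_apply,
    ← sum_const]
  congr 2
  refine Finset.sum_congr rfl fun i hi => ?_
  have hij := ne_of_mem_erase hi
  exact swOpQuot_apply_X_mul hij (hq i j hij) (hp _)

theorem dunklD_X_mul_sqVars {qs qσ : Fin r → Fin r → Module.End ℂ (Pol r)}
    (hqs : QuotS qs) (hqσ : QuotSig qσ) {f : Pol r} (hf : f.IsSymmetric) :
    dunklD a qs qσ j (X j * sqVars f)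
      = pderiv j (X j * sqVars f) + a • (#(univ.erase j) • sqVars f) := by
  have hs := isSymmetric_sqVars hf
  have hsum : ∑ i ∈ univ.erase j, (qs i j + qσ i j) (X j * sqVars f)
      = #(univ.erase j) • (sqVars f + sqVars f) := by
    rw [← sum_const]
    refine Finset.sum_congr rfl fun i hi => ?_
    have hij := ne_of_mem_erase hi
    rw [LinearMap.add_apply, swOpQuot_apply_X_mul hij (hqs i j hij) (hs _),
      sswOpQuot_apply_X_mul hij (hqσ i j hij) (by rw [sswOp_sqVars, swOp_apply_of_isSymmetric hs])]
  rw [dunklD, LinearMap.add_apply, LinearMap.smul_apply, LinearMap.sum_apply, pd_apply, hsum]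
  module

theorem cherednikA_of_isSymmetric {q : Fin r → Fin r → Module.End ℂ (Pol r)}
    (hq : DunklQuotA q) {p : Pol r} (hp : p.IsSymmetric) :
    cherednikA a q j p = pderiv j (X j * p) + (a / 2) • (#(univ.erase j) • p)
      - (a / 2) • (#(univ.filter (· < j)) • p) := by
  rw [cherednikA, LinearMap.sub_apply, Module.End.mul_apply, mulOp, LinearMap.mulLeft_apply,
    dunklA_X_mul_of_isSymmetric hq hp, LinearMap.smul_apply, LinearMap.sum_apply,
    Finset.sum_congr rfl fun i _ => swOp_apply_of_isSymmetric hp i j, sum_const]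

theorem cherednikD_sqVars {qs qσ : Fin r → Fin r → Module.End ℂ (Pol r)}
    (hqs : QuotS qs) (hqσ : QuotSig qσ) {f : Pol r} (hf : f.IsSymmetric) :
    cherednikD a qs qσ j (sqVars f) = pderiv j (X j * sqVars f)
      + a • (#(univ.erase j) • sqVars f) - a • (#(univ.filter (· < j)) • sqVars f) := by
  have hs := isSymmetric_sqVars hf
  have hsum : ∑ i ∈ univ.filter (· < j), (swOp i j + sswOp i j) (sqVars f)
      = #(univ.filter (· < j)) • (sqVars f + sqVars f) := by
    rw [← sum_const]
    refine Finset.sum_congr rfl fun i _ => ?_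
    rw [LinearMap.add_apply, sswOp_sqVars, swOp_apply_of_isSymmetric hs]
  rw [cherednikD, LinearMap.sub_apply, Module.End.mul_apply, mulOp, LinearMap.mulLeft_apply,
    dunklD_X_mul_sqVars hqs hqσ hf, LinearMap.smul_apply, LinearMap.sum_apply, hsum]
  module

end Cherednik

/-- On even symmetric polynomials `f(x₁²,…,x_r²)`, the type-D Cherednik operator `U_j^D`
equals `2(U_j^A - 1/2)` in the squared variables `y_j = x_j²`, where `U_j^A` is the
type-A Cherednik operator with parameter `a`. -/
theorem cherednikD_on_even {r : ℕ} (a : ℂ)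
    (qs qσ qA : Fin r → Fin r → Module.End ℂ (Pol r))
    (hqs : QuotS qs) (hqσ : QuotSig qσ) (hqA : DunklQuotA qA)
    (j : Fin r) (f : Pol r) (hf : f.IsSymmetric) :
    cherednikD a qs qσ j (sqVars f)
      = sqVars ((2 : ℂ) • (cherednikA a qA j f - (1 / 2 : ℂ) • f)) := by
  rw [cherednikD_sqVars hqs hqσ hf, cherednikA_of_isSymmetric hqA hf,
    pderiv_X_mul_sqVars]
  simp only [sqVars, map_sub, map_add, map_smul, map_nsmul]
  module
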